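/- arXiv:2406.10369 — 6 statements merged into one kernel-verified Lean document; each statement's English description precedes it below -/
import Mathlib

section
/- If G and G' are IOD graphs with crossover compatible IO partitions (Ψ,Ω) and (Ψ',Ω'), then any crossover child C produced from them is itself an IOD graph: its input set I and output set O' are disjoint subsets of its node set Ψ ∪ Ω', no edge of C ends at a node of I, and no edge of C starts at a node of O'. -/
/-- An Input/Output Directed (IOD) graph: a set of nodes `N` inside a common
vertex type `V`, a set of directed edges `E ⊆ N × N`, and disjoint subsets
`I, O ⊆ N` (inputs and outputs) such that no edge ends at a node of `I`
and no edge starts at a node of `O`. -/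
structure IODGraph (V : Type) where
  N : Set V
  E : Set (V × V)
  I : Set V
  O : Set V
  I_sub : I ⊆ N
  O_sub : O ⊆ N
  disjIO : Disjoint I O
  E_mem : ∀ e ∈ E, e.1 ∈ N ∧ e.2 ∈ N
  no_into_I : ∀ e ∈ E, e.2 ∉ I
  no_outof_O : ∀ e ∈ E, e.1 ∉ O

namespace IODGraph

variable {V : Type}

/-- `G.Reach a b`: there is a directed path (possibly trivial) from `a` to `b` in `G`. -/
def Reach (G : IODGraph V) : V → V → Prop :=
  Relation.ReflTransGen (fun x y => (x, y) ∈ G.E)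

/-- Reachability by a directed path lying entirely within the set `S`. -/
def ReachWithin (G : IODGraph V) (S : Set V) : V → V → Prop :=
  Relation.ReflTransGen (fun x y => (x, y) ∈ G.E ∧ x ∈ S ∧ y ∈ S)

/-- `n` lies on a directed path from some input to some output. -/
def OnIOPath (G : IODGraph V) (n : V) : Prop :=
  ∃ i ∈ G.I, ∃ o ∈ G.O, G.Reach i n ∧ G.Reach n o

/-- The no dangling nodes condition: every intermediate node lies on a
directed path from some input to some output. -/
def NoDangling (G : IODGraph V) : Prop :=
  ∀ n ∈ G.N \ (G.I ∪ G.O), G.OnIOPath n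

/-- Partially informative: a path from some input to some output. -/
def PartiallyInformative (G : IODGraph V) : Prop :=
  ∃ i ∈ G.I, ∃ o ∈ G.O, G.Reach i o

/-- Very informative: from every input there is a path to some output. -/
def VeryInformative (G : IODGraph V) : Prop :=
  ∀ i ∈ G.I, ∃ o ∈ G.O, G.Reach i o

/-- Fully informative: for every input and every output there is a path. -/
def FullyInformative (G : IODGraph V) : Prop :=
  ∀ i ∈ G.I, ∀ o ∈ G.O, G.Reach i o

/-- Non-informative: no path from any input to any output. -/
def NonInformative (G : IODGraph V) : Prop :=
  ∀ i ∈ G.I, ∀ o ∈ G.O, ¬ G.Reach i o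

/-- Partially actionable: a path from some input to some output. -/
def PartiallyActionable (G : IODGraph V) : Prop :=
  ∃ i ∈ G.I, ∃ o ∈ G.O, G.Reach i o

/-- Very actionable: for every output there is a path from some input to it. -/
def VeryActionable (G : IODGraph V) : Prop :=
  ∀ o ∈ G.O, ∃ i ∈ G.I, G.Reach i o

/-- Fully actionable: for every input and every output there is a path. -/
def FullyActionable (G : IODGraph V) : Prop :=
  ∀ i ∈ G.I, ∀ o ∈ G.O, G.Reach i o

/-- An IO partition `(Ψ, Ω)` of the node set of `G`, with `I ⊆ Ψ` and `O ⊆ Ω`. -/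
structure IOPartition (G : IODGraph V) where
  Psi : Set V
  Om : Set V
  union_eq : Psi ∪ Om = G.N
  disj : Disjoint Psi Om
  I_sub : G.I ⊆ Psi
  O_sub : G.O ⊆ Om

/-- Forward links of an IO partition: edges from `Ψ` to `Ω`. -/
def Fwd (G : IODGraph V) (P : IOPartition G) : Set (V × V) :=
  {e | e ∈ G.E ∧ e.1 ∈ P.Psi ∧ e.2 ∈ P.Om}

/-- Backward links of an IO partition: edges from `Ω` to `Ψ`. -/
def Bwd (G : IODGraph V) (P : IOPartition G) : Set (V × V) :=
  {e | e ∈ G.E ∧ e.1 ∈ P.Om ∧ e.2 ∈ P.Psi}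

/-- The input part `Ψ` is contiguous: every non-input node of `Ψ` is reached
from some input by a path inside `Ψ`. -/
def InputContiguous (G : IODGraph V) (P : IOPartition G) : Prop :=
  ∀ n ∈ P.Psi \ G.I, ∃ i ∈ G.I, G.ReachWithin P.Psi i n

/-- The output part `Ω` is contiguous: every non-output node of `Ω` reaches
some output by a path inside `Ω`. -/
def OutputContiguous (G : IODGraph V) (P : IOPartition G) : Prop :=
  ∀ n ∈ P.Om \ G.O, ∃ o ∈ G.O, G.ReachWithin P.Om n o

/-- Crossover compatibility of two IOD graphs with chosen IO partitions. -/
structure CrossCompat (G G' : IODGraph V) (P : IOPartition G) (P' : IOPartition G') : Prop where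
  psi_om' : P.Psi ∩ P'.Om = ∅
  psi'_om : P'.Psi ∩ P.Om = ∅
  finF : (Fwd G P).Finite
  finF' : (Fwd G' P').Finite
  finB : (Bwd G P).Finite
  finB' : (Bwd G' P').Finite
  cardF : (Fwd G P).ncard = (Fwd G' P').ncard
  cardB : (Bwd G P).ncard = (Bwd G' P').ncard

/-- The crossover membrane induced by bijections `g : F(Ψ,Ω) ≃ F(Ψ',Ω')` and
`h : B(Ψ',Ω') ≃ B(Ψ,Ω)`: the edges `(source of f, destination of g f)` for
forward links `f`, and `(source of b', destination of h b')` for backward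
links `b'` of the output parent. -/
def membraneEdges (G G' : IODGraph V) (P : IOPartition G) (P' : IOPartition G')
    (g : Fwd G P ≃ Fwd G' P') (h : Bwd G' P' ≃ Bwd G P) : Set (V × V) :=
  (Set.range fun f : Fwd G P => ((f : V × V).1, (g f : V × V).2)) ∪
  (Set.range fun b' : Bwd G' P' => ((b' : V × V).1, (h b' : V × V).2))

/-- The edge set of the crossover child: edges of `G` within `Ψ`, edges of `G'`
within `Ω'`, and the crossover membrane. -/
def childEdges (G G' : IODGraph V) (P : IOPartition G) (P' : IOPartition G')
    (g : Fwd G P ≃ Fwd G' P') (h : Bwd G' P' ≃ Bwd G P) : Set (V × V) :=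
  {e | e ∈ G.E ∧ e.1 ∈ P.Psi ∧ e.2 ∈ P.Psi} ∪
  {e | e ∈ G'.E ∧ e.1 ∈ P'.Om ∧ e.2 ∈ P'.Om} ∪
  membraneEdges G G' P P' g h

/-- Reachability (directed paths) in the crossover child. -/
def childReach (G G' : IODGraph V) (P : IOPartition G) (P' : IOPartition G')
    (g : Fwd G P ≃ Fwd G' P') (h : Bwd G' P' ≃ Bwd G P) : V → V → Prop :=
  Relation.ReflTransGen (fun x y => (x, y) ∈ childEdges G G' P P' g h)

end IODGraph

open IODGraph

/-!
Every edge of the child is an edge of `G` inside `Ψ`, an edge of `G'` inside `Ω'`, or a membrane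
edge joining `Ψ` and `Ω'`. A membrane edge ends either in `Ω'` (forward, via `g`) or at the
destination of a backward link of `G` (via `h`); in both cases it cannot end in `I ⊆ Ψ`, because
`Ψ ∩ Ω' = ∅` and `G` has no edge into `I`. Dually, it starts in `Ψ` or at the source of a backward
link of `G'`, hence never in `O' ⊆ Ω'`.
-/

namespace IODGraph

variable {V : Type} {G G' : IODGraph V} {P : IOPartition G} {P' : IOPartition G'}
  {g : Fwd G P ≃ Fwd G' P'} {h : Bwd G' P' ≃ Bwd G P} {e : V × V}

theorem CrossCompat.disjoint_psi_om' (hc : CrossCompat G G' P P') : Disjoint P.Psi P'.Om :=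
  Set.disjoint_iff_inter_eq_empty.mpr hc.psi_om'

theorem childEdges_mem_nodes (he : e ∈ childEdges G G' P P' g h) :
    e.1 ∈ P.Psi ∪ P'.Om ∧ e.2 ∈ P.Psi ∪ P'.Om := by
  rcases he with (⟨-, h₁, h₂⟩ | ⟨-, h₁, h₂⟩) | ⟨f, rfl⟩ | ⟨b', rfl⟩
  · exact ⟨Or.inl h₁, Or.inl h₂⟩
  · exact ⟨Or.inr h₁, Or.inr h₂⟩
  · exact ⟨Or.inl f.2.2.1, Or.inr (g f).2.2.2⟩
  · exact ⟨Or.inr b'.2.2.1, Or.inl (h b').2.2.2⟩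

theorem childEdges_snd_eq_or_mem_om' (he : e ∈ childEdges G G' P P' g h) :
    (∃ a ∈ G.E, a.2 = e.2) ∨ e.2 ∈ P'.Om := by
  rcases he with (⟨hE, -⟩ | ⟨-, -, h₂⟩) | ⟨f, rfl⟩ | ⟨b', rfl⟩
  · exact Or.inl ⟨e, hE, rfl⟩
  · exact Or.inr h₂
  · exact Or.inr (g f).2.2.2
  · exact Or.inl ⟨h b', (h b').2.1, rfl⟩

theorem childEdges_fst_eq_or_mem_psi (he : e ∈ childEdges G G' P P' g h) :
    (∃ a ∈ G'.E, a.1 = e.1) ∨ e.1 ∈ P.Psi := by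
  rcases he with (⟨-, h₁, -⟩ | ⟨hE, -⟩) | ⟨f, rfl⟩ | ⟨b', rfl⟩
  · exact Or.inr h₁
  · exact Or.inl ⟨e, hE, rfl⟩
  · exact Or.inr f.2.2.1
  · exact Or.inl ⟨b', b'.2.1, rfl⟩

theorem childEdges_snd_notMem_I (hΨΩ' : Disjoint P.Psi P'.Om)
    (he : e ∈ childEdges G G' P P' g h) : e.2 ∉ G.I := by
  rcases childEdges_snd_eq_or_mem_om' he with ⟨a, ha, ha₂⟩ | hΩ'
  · exact ha₂ ▸ G.no_into_I a ha
  · exact fun hI => hΨΩ'.notMem_of_mem_right hΩ' (P.I_sub hI)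

theorem childEdges_fst_notMem_O (hΨΩ' : Disjoint P.Psi P'.Om)
    (he : e ∈ childEdges G G' P P' g h) : e.1 ∉ G'.O := by
  rcases childEdges_fst_eq_or_mem_psi he with ⟨a, ha, ha₁⟩ | hΨ
  · exact ha₁ ▸ G'.no_outof_O a ha
  · exact fun hO => hΨΩ'.notMem_of_mem_left hΨ (P'.O_sub hO)

end IODGraph

/-- any crossover child of crossover compatible IOD graphs is
itself an IOD graph: its inputs `I` and outputs `O'` are disjoint subsets of
its node set `Ψ ∪ Ω'`, no edge of the child ends at a node of `I`, and no
edge of the child starts at a node of `O'`. -/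
theorem crossover_child_is_IODGraph {V : Type} (G G' : IODGraph V)
    (P : IOPartition G) (P' : IOPartition G')
    (hc : CrossCompat G G' P P')
    (g : Fwd G P ≃ Fwd G' P') (h : Bwd G' P' ≃ Bwd G P) :
    Disjoint G.I G'.O ∧
    G.I ⊆ P.Psi ∪ P'.Om ∧
    G'.O ⊆ P.Psi ∪ P'.Om ∧
    (∀ e ∈ childEdges G G' P P' g h, e.1 ∈ P.Psi ∪ P'.Om ∧ e.2 ∈ P.Psi ∪ P'.Om) ∧
    (∀ e ∈ childEdges G G' P P' g h, e.2 ∉ G.I) ∧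
    (∀ e ∈ childEdges G G' P P' g h, e.1 ∉ G'.O) := by
  have hΨΩ' := hc.disjoint_psi_om'
  exact ⟨hΨΩ'.mono P.I_sub P'.O_sub,
    fun _ hx => Or.inl (P.I_sub hx), fun _ hx => Or.inr (P'.O_sub hx),
    fun _ => childEdges_mem_nodes, fun _ => childEdges_snd_notMem_I hΨΩ',
    fun _ => childEdges_fst_notMem_O hΨΩ'⟩
end

section
/- For every J ≥ 1 and K ≥ 1 there exist IOD graphs G and G', each with J inputs and K outputs and each fully informative, together with crossover compatible IO partitions (Ψ,Ω) of G and (Ψ',Ω') of G' and a crossover membrane, such that the resulting crossover child is non-informative (it contains no directed path from any input to any output). -/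
open IODGraph


/-!
Both parents live on one vertex type and share their input and output nodes. In the input
parent `G` every input feeds the source `src true`, and both sources `src r` feed a hub `mid`
that feeds every output. In the output parent `G'` every input feeds a hub `mid'` that feeds two
sinks `dst r`, of which only `dst false` feeds the outputs. Cutting `G` below its sources and
`G'` below `mid'`, the forward links are `(src r, mid)` and `(mid', dst r)`, there are no backward
links, and matching the forward links by `r` gives the membrane edges `(src r, dst r)`. The
input-reachable source thus lands on the dead end `dst true`, while the live branch `dst false`
hangs off the unreachable source `src false`; so `{inputs, src true, dst true}` is closed under
the child's edges and contains no output.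
-/

theorem Relation.ReflTransGen.mem_of_closed {α : Type*} {r : α → α → Prop} {S : Set α}
    (hS : ∀ x y, r x y → x ∈ S → y ∈ S) {a b : α} (hab : Relation.ReflTransGen r a b)
    (ha : a ∈ S) : b ∈ S := by
  induction hab with
  | refl => exact ha
  | tail _ hbc ih => exact hS _ _ hbc ih

namespace IODGraph

variable {V : Type}

theorem CrossCompat.of_equiv {G G' : IODGraph V} {P : IOPartition G} {P' : IOPartition G'}
    (hΨΩ' : P.Psi ∩ P'.Om = ∅) (hΨ'Ω : P'.Psi ∩ P.Om = ∅)
    [Finite (Fwd G P)] [Finite (Bwd G P)]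
    (g : Fwd G P ≃ Fwd G' P') (h : Bwd G' P' ≃ Bwd G P) : CrossCompat G G' P P' :=
  have : Finite (Fwd G' P') := .of_equiv _ g
  have : Finite (Bwd G' P') := .of_equiv _ h.symm
  { psi_om' := hΨΩ'
    psi'_om := hΨ'Ω
    finF := Set.toFinite _
    finF' := Set.toFinite _
    finB := Set.toFinite _
    finB' := Set.toFinite _
    cardF := Set.ncard_congr' g
    cardB := Set.ncard_congr' h.symm }

end IODGraph

namespace CrossoverCounterexample

open Set

variable {α β : Type}

inductive Node (α β : Type) : Type
  | inp (i : α)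
  | src (r : Bool)
  | mid
  | mid'
  | dst (r : Bool)
  | out (o : β)

open Node

inductive Edge : Node α β → Node α β → Prop
  | inp_src (i : α) : Edge (inp i) (src true)
  | src_mid (r : Bool) : Edge (src r) mid
  | mid_out (o : β) : Edge mid (out o)

inductive Edge' : Node α β → Node α β → Prop
  | inp_mid' (i : α) : Edge' (inp i) mid'
  | mid'_dst (r : Bool) : Edge' mid' (dst r)
  | dst_out (o : β) : Edge' (dst false) (out o)

def psi : Set (Node α β) := range inp ∪ range src
def om : Set (Node α β) := {mid} ∪ range out
def psi' : Set (Node α β) := range inp ∪ {mid'}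
def om' : Set (Node α β) := range dst ∪ range out

variable (α β) in
def inputParent : IODGraph (Node α β) where
  N := psi ∪ om
  E := {e | Edge e.1 e.2}
  I := range inp
  O := range out
  I_sub := by intro v; simp_all [psi]
  O_sub := by intro v; simp_all [om]
  disjIO := by simp [Set.disjoint_left]
  E_mem := by rintro ⟨x, y⟩ (_ | _ | _) <;> simp [psi, om]
  no_into_I := by rintro ⟨x, y⟩ (_ | _ | _) <;> simp
  no_outof_O := by rintro ⟨x, y⟩ (_ | _ | _) <;> simp

variable (α β) in
def outputParent : IODGraph (Node α β) where
  N := psi' ∪ om'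
  E := {e | Edge' e.1 e.2}
  I := range inp
  O := range out
  I_sub := by intro v; simp_all [psi']
  O_sub := by intro v; simp_all [om']
  disjIO := by simp [Set.disjoint_left]
  E_mem := by rintro ⟨x, y⟩ (_ | _ | _) <;> simp [psi', om']
  no_into_I := by rintro ⟨x, y⟩ (_ | _ | _) <;> simp
  no_outof_O := by rintro ⟨x, y⟩ (_ | _ | _) <;> simp

variable (α β) in
def inputPartition : IOPartition (inputParent α β) where
  Psi := psi
  Om := om
  union_eq := rfl
  disj := by simp [Set.disjoint_left, psi, om]
  I_sub := subset_union_left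
  O_sub := subset_union_right

variable (α β) in
def outputPartition : IOPartition (outputParent α β) where
  Psi := psi'
  Om := om'
  union_eq := rfl
  disj := by simp [Set.disjoint_left, psi', om']
  I_sub := subset_union_left
  O_sub := subset_union_right

theorem fwd_inputPartition :
    Fwd (inputParent α β) (inputPartition α β) = range fun r : Bool => (src r, mid) := by
  ext ⟨x, y⟩
  constructor
  · rintro ⟨he, hx, hy⟩
    cases he <;> simp_all [inputPartition, psi, om]
  · rintro ⟨r, hr⟩
    cases hr
    exact ⟨.src_mid r, by simp [inputPartition, psi], by simp [inputPartition, om]⟩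

theorem fwd_outputPartition :
    Fwd (outputParent α β) (outputPartition α β) = range fun r : Bool => (mid', dst r) := by
  ext ⟨x, y⟩
  constructor
  · rintro ⟨he, hx, hy⟩
    cases he <;> simp_all [outputPartition, psi', om']
  · rintro ⟨r, hr⟩
    cases hr
    exact ⟨.mid'_dst r, by simp [outputPartition, psi'], by simp [outputPartition, om']⟩

instance : IsEmpty (Bwd (inputParent α β) (inputPartition α β)) := by
  refine ⟨fun ⟨⟨x, y⟩, he, hx, hy⟩ => ?_⟩
  cases he <;> simp_all [inputPartition, psi, om]

instance : IsEmpty (Bwd (outputParent α β) (outputPartition α β)) := by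
  refine ⟨fun ⟨⟨x, y⟩, he, hx, hy⟩ => ?_⟩
  cases he <;> simp_all [outputPartition, psi', om']

noncomputable def fwdEquiv : Bool ≃ Fwd (inputParent α β) (inputPartition α β) :=
  (Equiv.ofInjective _ fun r s h => by simpa using h).trans
    (Equiv.setCongr fwd_inputPartition.symm)

noncomputable def fwdEquiv' : Bool ≃ Fwd (outputParent α β) (outputPartition α β) :=
  (Equiv.ofInjective _ fun r s h => by simpa using h).trans
    (Equiv.setCongr fwd_outputPartition.symm)

instance : Finite (Fwd (inputParent α β) (inputPartition α β)) :=
  .of_equiv _ fwdEquiv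

noncomputable def membraneFwd :
    Fwd (inputParent α β) (inputPartition α β) ≃ Fwd (outputParent α β) (outputPartition α β) :=
  fwdEquiv.symm.trans fwdEquiv'

def membraneBwd :
    Bwd (outputParent α β) (outputPartition α β) ≃ Bwd (inputParent α β) (inputPartition α β) :=
  Equiv.equivOfIsEmpty _ _

theorem membraneEdges_eq :
    membraneEdges (inputParent α β) (outputParent α β) (inputPartition α β)
        (outputPartition α β) membraneFwd membraneBwd
      = range fun r : Bool => (src r, dst r) := by
  rw [membraneEdges, range_eq_empty (ι := Bwd (outputParent α β) (outputPartition α β)),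
    union_empty, ← fwdEquiv.surjective.range_comp]
  congr 1
  funext r
  simp only [membraneFwd, Function.comp_apply, Equiv.trans_apply, Equiv.symm_apply_apply]
  rfl

theorem fullyInformative_inputParent : FullyInformative (inputParent α β) := by
  rintro _ ⟨i, rfl⟩ _ ⟨o, rfl⟩
  exact .head (Edge.inp_src i) (.head (Edge.src_mid true) (.single (Edge.mid_out o)))

theorem fullyInformative_outputParent : FullyInformative (outputParent α β) := by
  rintro _ ⟨i, rfl⟩ _ ⟨o, rfl⟩
  exact .head (Edge'.inp_mid' i) (.head (Edge'.mid'_dst false) (.single (Edge'.dst_out o)))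

theorem crossCompat :
    CrossCompat (inputParent α β) (outputParent α β) (inputPartition α β)
      (outputPartition α β) :=
  .of_equiv (by ext v; cases v <;> simp [inputPartition, outputPartition, psi, om'])
    (by ext v; cases v <;> simp [inputPartition, outputPartition, psi', om])
    membraneFwd membraneBwd

def inputReach : Set (Node α β) := range inp ∪ {src true, dst true}

theorem childEdges_mem_inputReach {x y : Node α β}
    (hxy : (x, y) ∈ childEdges (inputParent α β) (outputParent α β) (inputPartition α β)
      (outputPartition α β) membraneFwd membraneBwd)
    (hx : x ∈ inputReach) : y ∈ inputReach := by
  rcases hxy with (⟨he, -, hy⟩ | ⟨he, hx', -⟩) | hm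
  · cases he <;> simp_all [inputReach, inputPartition, psi]
  · cases he <;> simp_all [inputReach, outputPartition, om']
  · rw [membraneEdges_eq] at hm
    obtain ⟨r, hr⟩ := hm
    cases hr
    cases r <;> simp_all [inputReach]

theorem not_childReach_inp_out (i : α) (o : β) :
    ¬ childReach (inputParent α β) (outputParent α β) (inputPartition α β)
      (outputPartition α β) membraneFwd membraneBwd (inp i) (out o) := fun h => by
  simpa [inputReach] using
    h.mem_of_closed (fun _ _ => childEdges_mem_inputReach) (by simp [inputReach])

theorem ncard_range_inp : (range (inp : α → Node α β)).ncard = Nat.card α :=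
  ncard_range_of_injective fun _ _ => Node.inp.inj

theorem ncard_range_out : (range (out : β → Node α β)).ncard = Nat.card β :=
  ncard_range_of_injective fun _ _ => Node.out.inj

end CrossoverCounterexample

/-- for every `J ≥ 1` and `K ≥ 1` there are fully informative
IOD graphs `G, G'`, each with `J` inputs and `K` outputs, with crossover
compatible IO partitions and a crossover membrane whose crossover child is
non-informative. -/
theorem fully_informative_parents_can_yield_noninformative_child :
    ∀ J K : ℕ, 1 ≤ J → 1 ≤ K →
    ∃ (V : Type) (G G' : IODGraph V) (P : IOPartition G) (P' : IOPartition G')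
      (g : Fwd G P ≃ Fwd G' P') (h : Bwd G' P' ≃ Bwd G P),
      G.I.Finite ∧ G.O.Finite ∧ G'.I.Finite ∧ G'.O.Finite ∧
      G.I.ncard = J ∧ G.O.ncard = K ∧ G'.I.ncard = J ∧ G'.O.ncard = K ∧
      FullyInformative G ∧ FullyInformative G' ∧
      CrossCompat G G' P P' ∧
      (∀ i ∈ G.I, ∀ o' ∈ G'.O, ¬ childReach G G' P P' g h i o') := by
  intro J K _ _
  open CrossoverCounterexample in
  refine ⟨Node (Fin J) (Fin K), inputParent _ _, outputParent _ _, inputPartition _ _,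
    outputPartition _ _, membraneFwd, membraneBwd, Set.finite_range _, Set.finite_range _,
    Set.finite_range _, Set.finite_range _, ?_, ?_, ?_, ?_, fullyInformative_inputParent,
    fullyInformative_outputParent, crossCompat, ?_⟩
  · exact ncard_range_inp.trans (Nat.card_fin J)
  · exact ncard_range_out.trans (Nat.card_fin K)
  · exact ncard_range_inp.trans (Nat.card_fin J)
  · exact ncard_range_out.trans (Nat.card_fin K)
  · rintro _ ⟨i, rfl⟩ _ ⟨o, rfl⟩
    exact not_childReach_inp_out i o
end

section
/- Suppose IOD graph G has an input-contiguous IO partition (Ψ,Ω), IOD graph G' has an output-contiguous IO partition (Ψ',Ω'), these partitions are crossover compatible, and both G and G' satisfy the no dangling nodes condition. Then any crossover child produced from these partitions also satisfies the no dangling nodes condition: every intermediate node of the child lies on a directed path in the child from some input in I to some output in O'. -/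
open IODGraph

/-!
A child node in `Ψ` is reached from an input inside `Ψ` by input-contiguity. To reach an
output of `G'` from it, follow a path of `G` to an output of `G`: it must leave `Ψ`, and the
first edge that does so is a forward link `f`, which the membrane redirects to the
destination of `g f ∈ Ω'`; from there output-contiguity of `Ω'` finishes the path. Nodes of
`Ω'` are handled dually, using the last edge by which a path of `G'` from an input enters
`Ω'`.
-/

namespace IODGraph

variable {V : Type}

section Paths

variable {G : IODGraph V} {S : Set V} {a b : V}

theorem Reach.exists_last_entry (hab : G.Reach a b) (ha : a ∉ S) (hb : b ∈ S) :
    ∃ x y, (x, y) ∈ G.E ∧ x ∉ S ∧ y ∈ S ∧ G.ReachWithin S y b := by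
  induction hab with
  | refl => exact absurd hb ha
  | @tail y z _ hyz ih =>
    by_cases hy : y ∈ S
    · obtain ⟨x, w, hxw, hx, hw, hwy⟩ := ih hy
      exact ⟨x, w, hxw, hx, hw, hwy.tail ⟨hyz, hy, hb⟩⟩
    · exact ⟨y, z, hyz, hy, hb, .refl⟩

theorem Reach.exists_first_exit (hab : G.Reach a b) (ha : a ∈ S) (hb : b ∉ S) :
    ∃ x y, G.ReachWithin S a x ∧ (x, y) ∈ G.E ∧ x ∈ S ∧ y ∉ S := by
  induction hab using Relation.ReflTransGen.head_induction_on with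
  | refl => exact absurd ha hb
  | @head x y hxy _ ih =>
    by_cases hy : y ∈ S
    · obtain ⟨u, w, hyu, huw, hu, hw⟩ := ih hy
      exact ⟨u, w, hyu.head ⟨hxy, ha, hy⟩, huw, hu, hw⟩
    · exact ⟨x, y, .refl, hxy, ha, hy⟩

end Paths

namespace IOPartition

variable {G : IODGraph V} (P : IOPartition G) {n : V}

theorem mem_N_of_mem_Psi (hn : n ∈ P.Psi) : n ∈ G.N :=
  P.union_eq ▸ Or.inl hn

theorem mem_N_of_mem_Om (hn : n ∈ P.Om) : n ∈ G.N :=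
  P.union_eq ▸ Or.inr hn

theorem mem_Psi_of_mem_N (hn : n ∈ G.N) (hnΩ : n ∉ P.Om) : n ∈ P.Psi := by
  rw [← P.union_eq] at hn
  exact hn.resolve_right hnΩ

theorem mem_Om_of_mem_N (hn : n ∈ G.N) (hnΨ : n ∉ P.Psi) : n ∈ P.Om := by
  rw [← P.union_eq] at hn
  exact hn.resolve_left hnΨ

theorem notMem_Om_of_mem_I (hn : n ∈ G.I) : n ∉ P.Om :=
  Set.disjoint_left.1 P.disj (P.I_sub hn)

theorem notMem_Psi_of_mem_O (hn : n ∈ G.O) : n ∉ P.Psi :=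
  Set.disjoint_right.1 P.disj (P.O_sub hn)

theorem mem_intermediate_of_mem_Psi (hn : n ∈ P.Psi) (hnI : n ∉ G.I) :
    n ∈ G.N \ (G.I ∪ G.O) :=
  ⟨P.mem_N_of_mem_Psi hn, fun h => h.elim hnI fun hO => P.notMem_Psi_of_mem_O hO hn⟩

theorem mem_intermediate_of_mem_Om (hn : n ∈ P.Om) (hnO : n ∉ G.O) :
    n ∈ G.N \ (G.I ∪ G.O) :=
  ⟨P.mem_N_of_mem_Om hn, fun h => h.elim (fun hI => P.notMem_Om_of_mem_I hI hn) hnO⟩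

end IOPartition

theorem InputContiguous.exists_reachWithin {G : IODGraph V} {P : IOPartition G}
    (hIC : InputContiguous G P) {n : V} (hn : n ∈ P.Psi) :
    ∃ i ∈ G.I, G.ReachWithin P.Psi i n := by
  by_cases hnI : n ∈ G.I
  · exact ⟨n, hnI, .refl⟩
  · exact hIC n ⟨hn, hnI⟩

theorem OutputContiguous.exists_reachWithin {G : IODGraph V} {P : IOPartition G}
    (hOC : OutputContiguous G P) {n : V} (hn : n ∈ P.Om) :
    ∃ o ∈ G.O, G.ReachWithin P.Om n o := by
  by_cases hnO : n ∈ G.O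
  · exact ⟨n, hnO, .refl⟩
  · exact hOC n ⟨hn, hnO⟩

section Child

variable {G G' : IODGraph V} {P : IOPartition G} {P' : IOPartition G'}
  {g : Fwd G P ≃ Fwd G' P'} {h : Bwd G' P' ≃ Bwd G P} {a b : V}

theorem childReach_of_reachWithin_Psi (hab : G.ReachWithin P.Psi a b) :
    childReach G G' P P' g h a b :=
  Relation.ReflTransGen.mono (fun _ _ hxy => Or.inl (Or.inl hxy)) _ _ hab

theorem childReach_of_reachWithin_Om (hab : G'.ReachWithin P'.Om a b) :
    childReach G G' P P' g h a b :=
  Relation.ReflTransGen.mono (fun _ _ hxy => Or.inl (Or.inr hxy)) _ _ hab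

theorem childReach_membrane_of_eq {f : Fwd G P} {e : Fwd G' P'} (hfe : g f = e) :
    childReach G G' P P' g h (f : V × V).1 (e : V × V).2 :=
  .single (Or.inr (Or.inl ⟨f, by subst hfe; rfl⟩))

theorem exists_childReach_from_input (hIC : InputContiguous G P) (hb : b ∈ P.Psi) :
    ∃ i ∈ G.I, childReach G G' P P' g h i b := by
  obtain ⟨i, hi, hib⟩ := hIC.exists_reachWithin hb
  exact ⟨i, hi, childReach_of_reachWithin_Psi hib⟩

theorem exists_childReach_to_output (hOC : OutputContiguous G' P') (ha : a ∈ P'.Om) :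
    ∃ o ∈ G'.O, childReach G G' P P' g h a o := by
  obtain ⟨o, ho, hao⟩ := hOC.exists_reachWithin ha
  exact ⟨o, ho, childReach_of_reachWithin_Om hao⟩

theorem exists_childReach_from_input_of_reach (hIC : InputContiguous G P)
    (ha : a ∈ G'.I) (hab : G'.Reach a b) (hb : b ∈ P'.Om) :
    ∃ i ∈ G.I, childReach G G' P P' g h i b := by
  obtain ⟨x, y, hxy, hx, hy, hyb⟩ := hab.exists_last_entry (P'.notMem_Om_of_mem_I ha) hb
  let e : Fwd G' P' := ⟨(x, y), hxy, P'.mem_Psi_of_mem_N (G'.E_mem _ hxy).1 hx, hy⟩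
  obtain ⟨i, hi, hix⟩ := hIC.exists_reachWithin (g.symm e).2.2.1
  exact ⟨i, hi, ((childReach_of_reachWithin_Psi hix).trans
    (childReach_membrane_of_eq (g.apply_symm_apply e))).trans (childReach_of_reachWithin_Om hyb)⟩

theorem exists_childReach_to_output_of_reach (hOC : OutputContiguous G' P')
    (hb : b ∈ G.O) (hab : G.Reach a b) (ha : a ∈ P.Psi) :
    ∃ o ∈ G'.O, childReach G G' P P' g h a o := by
  obtain ⟨x, y, hax, hxy, hx, hy⟩ := hab.exists_first_exit ha (P.notMem_Psi_of_mem_O hb)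
  let f : Fwd G P := ⟨(x, y), hxy, hx, P.mem_Om_of_mem_N (G.E_mem _ hxy).2 hy⟩
  obtain ⟨o, ho, hgo⟩ := hOC.exists_reachWithin (g f).2.2.2
  exact ⟨o, ho, ((childReach_of_reachWithin_Psi hax).trans
    (childReach_membrane_of_eq (f := f) rfl)).trans (childReach_of_reachWithin_Om hgo)⟩

end Child

end IODGraph

theorem crossover_child_no_dangling_general {V : Type} (G G' : IODGraph V)
    (P : IOPartition G) (P' : IOPartition G')
    (hIC : InputContiguous G P) (hOC : OutputContiguous G' P')
    (hdG : NoDangling G) (hdG' : NoDangling G')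
    (g : Fwd G P ≃ Fwd G' P') (h : Bwd G' P' ≃ Bwd G P) :
    ∀ n ∈ (P.Psi ∪ P'.Om) \ (G.I ∪ G'.O),
      ∃ i ∈ G.I, ∃ o' ∈ G'.O,
        childReach G G' P P' g h i n ∧ childReach G G' P P' g h n o' := by
  rintro n ⟨hnΨ | hnΩ', hn⟩
  · obtain ⟨i, hi, hin⟩ := exists_childReach_from_input hIC hnΨ
    obtain ⟨-, -, o, ho, -, hno⟩ :=
      hdG n (P.mem_intermediate_of_mem_Psi hnΨ fun hI => hn (Or.inl hI))
    obtain ⟨o', ho', hno'⟩ := exists_childReach_to_output_of_reach hOC ho hno hnΨ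
    exact ⟨i, hi, o', ho', hin, hno'⟩
  · obtain ⟨o', ho', hno'⟩ := exists_childReach_to_output hOC hnΩ'
    obtain ⟨i, hi, -, -, hin, -⟩ :=
      hdG' n (P'.mem_intermediate_of_mem_Om hnΩ' fun hO => hn (Or.inr hO))
    obtain ⟨i', hi', hi'n⟩ := exists_childReach_from_input_of_reach hIC hi hin hnΩ'
    exact ⟨i', hi', o', ho', hi'n, hno'⟩

/-- if `G` has an input-contiguous IO partition, `G'` has an
output-contiguous IO partition, the partitions are crossover compatible, and
both parents satisfy the no dangling nodes condition, then every intermediate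
node of any crossover child lies on a directed path in the child from some
input in `I` to some output in `O'`. -/
theorem crossover_child_no_dangling {V : Type} (G G' : IODGraph V)
    (P : IOPartition G) (P' : IOPartition G')
    (hIC : InputContiguous G P) (hOC : OutputContiguous G' P')
    (hc : CrossCompat G G' P P')
    (hdG : NoDangling G) (hdG' : NoDangling G')
    (g : Fwd G P ≃ Fwd G' P') (h : Bwd G' P' ≃ Bwd G P) :
    ∀ n ∈ (P.Psi ∪ P'.Om) \ (G.I ∪ G'.O),
      ∃ i ∈ G.I, ∃ o' ∈ G'.O,
        childReach G G' P P' g h i n ∧ childReach G G' P P' g h n o' :=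
  crossover_child_no_dangling_general G G' P P' hIC hOC hdG hdG' g h
end

section
/- If an IOD graph G satisfies the no dangling nodes condition and has at least one intermediate node, then for every IO partition (Ψ,Ω) of G: (i) every forward edge f ∈ F(Ψ,Ω) lies on some directed path from an input to an output, and (ii) the set of forward edges F(Ψ,Ω) is non-empty. -/
open IODGraph

/-! Every edge starts at an input or intermediate node and ends at an output or intermediate node,
so without dangling nodes it extends to an input-output path. An intermediate node gives such a
path; it starts in `Ψ` and ends in `Ω`, so one of its edges leaves `Ψ`: a forward link. -/

theorem Relation.ReflTransGen.exists_rel_of_mem_of_notMem {α : Type*} {r : α → α → Prop}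
    {S : Set α} {a b : α} (h : Relation.ReflTransGen r a b) (ha : a ∈ S) (hb : b ∉ S) :
    ∃ x y, r x y ∧ x ∈ S ∧ y ∉ S := by
  induction h with
  | refl => exact absurd ha hb
  | @tail c d _ hcd ih =>
    by_cases hc : c ∈ S
    · exact ⟨c, d, hcd, hc, hb⟩
    · exact ih hc

namespace IODGraph

variable {V : Type} {G : IODGraph V}

theorem NoDangling.exists_input_reach (hd : G.NoDangling) {a : V} (ha : a ∈ G.N)
    (haO : a ∉ G.O) : ∃ i ∈ G.I, G.Reach i a := by
  by_cases haI : a ∈ G.I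
  · exact ⟨a, haI, .refl⟩
  · obtain ⟨i, hi, -, -, hia, -⟩ := hd a ⟨ha, by simp [haI, haO]⟩
    exact ⟨i, hi, hia⟩

theorem NoDangling.exists_output_reach (hd : G.NoDangling) {b : V} (hb : b ∈ G.N)
    (hbI : b ∉ G.I) : ∃ o ∈ G.O, G.Reach b o := by
  by_cases hbO : b ∈ G.O
  · exact ⟨b, hbO, .refl⟩
  · obtain ⟨-, -, o, ho, -, hbo⟩ := hd b ⟨hb, by simp [hbI, hbO]⟩
    exact ⟨o, ho, hbo⟩

theorem NoDangling.exists_io_path_through_edge (hd : G.NoDangling) {e : V × V} (he : e ∈ G.E) :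
    ∃ i ∈ G.I, ∃ o ∈ G.O, G.Reach i e.1 ∧ G.Reach e.2 o := by
  obtain ⟨i, hi, hi1⟩ := hd.exists_input_reach (G.E_mem e he).1 (G.no_outof_O e he)
  obtain ⟨o, ho, h2o⟩ := hd.exists_output_reach (G.E_mem e he).2 (G.no_into_I e he)
  exact ⟨i, hi, o, ho, hi1, h2o⟩

theorem NoDangling.partiallyInformative (hd : G.NoDangling)
    (hint : (G.N \ (G.I ∪ G.O)).Nonempty) : G.PartiallyInformative := by
  obtain ⟨n, hn⟩ := hint
  obtain ⟨i, hi, o, ho, hin, hno⟩ := hd n hn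
  exact ⟨i, hi, o, ho, hin.trans hno⟩

theorem fwd_nonempty_of_reach (P : IOPartition G) {x y : V} (h : G.Reach x y)
    (hx : x ∈ P.Psi) (hy : y ∈ P.Om) : (Fwd G P).Nonempty := by
  obtain ⟨a, b, hab, ha, hb⟩ :=
    h.exists_rel_of_mem_of_notMem hx (P.disj.notMem_of_mem_right hy)
  have hbN : b ∈ P.Psi ∪ P.Om := P.union_eq ▸ (G.E_mem _ hab).2
  exact ⟨(a, b), hab, ha, hbN.resolve_left hb⟩

theorem fwd_nonempty_of_partiallyInformative (P : IOPartition G)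
    (h : G.PartiallyInformative) : (Fwd G P).Nonempty := by
  obtain ⟨i, hi, o, ho, hio⟩ := h
  exact fwd_nonempty_of_reach P hio (P.I_sub hi) (P.O_sub ho)

end IODGraph

/-- if `G` satisfies the no dangling nodes condition and has an
intermediate node, then for every IO partition, every forward edge lies on a
directed path from an input to an output, and the set of forward edges is
non-empty. -/
theorem forward_edges_on_paths_and_nonempty {V : Type} (G : IODGraph V)
    (hd : NoDangling G) (hint : (G.N \ (G.I ∪ G.O)).Nonempty)
    (P : IOPartition G) :
    (∀ f ∈ Fwd G P, ∃ i ∈ G.I, ∃ o ∈ G.O, G.Reach i f.1 ∧ G.Reach f.2 o) ∧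
    (Fwd G P).Nonempty :=
  ⟨fun _ hf => hd.exists_io_path_through_edge hf.1,
    fwd_nonempty_of_partiallyInformative P (hd.partiallyInformative hint)⟩
end

section
/- Suppose input parent IOD graph G is very informative, output parent IOD graph G' is partially informative, and both satisfy the no dangling nodes condition. Then any crossover child produced from an input-contiguous IO partition (Ψ,Ω) of G and an output-contiguous IO partition (Ψ',Ω') of G' (the partitions being crossover compatible) is very informative: for every input i ∈ I there is a directed path in the child from i to some output in O'. -/
open IODGraph

/-!
A path in `G` from an input `i` to an output starts in `Ψ` and ends in `Ω`, so it leaves `Ψ`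
through some forward link `f`, and its part before `f` lies in `Ψ` and hence survives in the
child. The membrane edge attached to `f` leads from there into `Ω'`, and output contiguity of
`Ω'` continues the path inside `Ω'`, where all edges of `G'` are kept, to an output of `G'`.
-/

theorem Relation.ReflTransGen.exists_exit {α : Type*} {r : α → α → Prop} {S : Set α} {a b : α}
    (hab : Relation.ReflTransGen r a b) (ha : a ∈ S) (hb : b ∉ S) :
    ∃ x y, Relation.ReflTransGen (fun x y => r x y ∧ x ∈ S ∧ y ∈ S) a x ∧
      x ∈ S ∧ r x y ∧ y ∉ S := by
  induction hab using Relation.ReflTransGen.head_induction_on with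
  | refl => exact absurd ha hb
  | @head x y hxy _ ih =>
    by_cases hy : y ∈ S
    · obtain ⟨u, v, hyu, hu, huv, hv⟩ := ih hy
      exact ⟨u, v, .head ⟨hxy, ha, hy⟩ hyu, hu, huv, hv⟩
    · exact ⟨x, y, .refl, ha, hxy, hy⟩

namespace IODGraph

variable {V : Type}

theorem Reach.exists_fwd_reachWithin {G : IODGraph V} (P : IOPartition G) {a b : V}
    (hab : G.Reach a b) (ha : a ∈ P.Psi) (hb : b ∈ P.Om) :
    ∃ f ∈ Fwd G P, G.ReachWithin P.Psi a f.1 := by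
  obtain ⟨x, y, hax, hx, hxy, hy⟩ :=
    Relation.ReflTransGen.exists_exit (S := P.Psi) hab ha (P.disj.notMem_of_mem_right hb)
  have hyN : y ∈ P.Psi ∪ P.Om := P.union_eq ▸ (G.E_mem _ hxy).2
  exact ⟨(x, y), ⟨hxy, hx, hyN.resolve_left hy⟩, hax⟩

section Child

variable {G G' : IODGraph V} {P : IOPartition G} {P' : IOPartition G'}
  {g : Fwd G P ≃ Fwd G' P'} {h : Bwd G' P' ≃ Bwd G P}

theorem childReach_of_reachWithin_psi {a b : V} (hab : G.ReachWithin P.Psi a b) :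
    childReach G G' P P' g h a b :=
  Relation.ReflTransGen.mono (fun _ _ hxy => Or.inl (Or.inl hxy)) _ _ hab

theorem childReach_of_reachWithin_om {a b : V} (hab : G'.ReachWithin P'.Om a b) :
    childReach G G' P P' g h a b :=
  Relation.ReflTransGen.mono (fun _ _ hxy => Or.inl (Or.inr hxy)) _ _ hab

theorem fwd_mem_childEdges (f : Fwd G P) :
    ((f : V × V).1, (g f : V × V).2) ∈ childEdges G G' P P' g h :=
  Or.inr (Or.inl ⟨f, rfl⟩)

end Child

end IODGraph

open IODGraph

theorem crossover_child_very_informative_general {V : Type} (G G' : IODGraph V)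
    (hG : VeryInformative G)
    (P : IOPartition G) (P' : IOPartition G')
    (hOC : OutputContiguous G' P')
    (g : Fwd G P ≃ Fwd G' P') (h : Bwd G' P' ≃ Bwd G P) :
    ∀ i ∈ G.I, ∃ o' ∈ G'.O, childReach G G' P P' g h i o' := by
  intro i hi
  obtain ⟨o, ho, hio⟩ := hG i hi
  obtain ⟨f, hf, hif⟩ := hio.exists_fwd_reachWithin P (P.I_sub hi) (P.O_sub ho)
  obtain ⟨o', ho', hgo'⟩ := hOC.exists_reachWithin (g ⟨f, hf⟩).2.2.2
  have hig : childReach G G' P P' g h i (g ⟨f, hf⟩ : V × V).2 :=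
    (childReach_of_reachWithin_psi hif).tail (fwd_mem_childEdges ⟨f, hf⟩)
  exact ⟨o', ho', hig.trans (childReach_of_reachWithin_om hgo')⟩

/-- a very informative input parent and a partially informative
output parent, both satisfying the no dangling nodes condition, crossed over
along an input-contiguous partition of the input parent and an
output-contiguous partition of the output parent, yield a very informative
child. -/
theorem crossover_child_very_informative {V : Type} (G G' : IODGraph V)
    (hG : VeryInformative G) (hG' : PartiallyInformative G')
    (hdG : NoDangling G) (hdG' : NoDangling G')
    (P : IOPartition G) (P' : IOPartition G')
    (hIC : InputContiguous G P) (hOC : OutputContiguous G' P')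
    (hc : CrossCompat G G' P P')
    (g : Fwd G P ≃ Fwd G' P') (h : Bwd G' P' ≃ Bwd G P) :
    ∀ i ∈ G.I, ∃ o' ∈ G'.O, childReach G G' P P' g h i o' :=
  crossover_child_very_informative_general G G' hG P P' hOC g h
end

section
/- There exist IOD graphs G and G', both non-informative (containing no directed path from any input to any output), together with crossover compatible IO partitions (Ψ,Ω) of G and (Ψ',Ω') of G' and a crossover membrane, such that the resulting crossover child is fully informative: for every input i ∈ I and every output o' ∈ O' there is a directed path in the child from i to o'. -/
open IODGraph

namespace IODGraph

variable {V : Type}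

theorem Reach.mem_of_edge_closed {G : IODGraph V} {S : Set V}
    (hS : ∀ x y, (x, y) ∈ G.E → x ∈ S → y ∈ S) {a b : V} (hab : G.Reach a b) (ha : a ∈ S) :
    b ∈ S := by
  induction hab with
  | refl => exact ha
  | tail _ hxy ih => exact hS _ _ hxy ih

theorem nonInformative_of_edge_closed {G : IODGraph V} (S : Set V) (hI : G.I ⊆ S)
    (hS : ∀ x y, (x, y) ∈ G.E → x ∈ S → y ∈ S) (hO : Disjoint S G.O) : NonInformative G :=
  fun _ hi _ ho hr => Set.disjoint_left.mp hO (hr.mem_of_edge_closed hS (hI hi)) ho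

theorem childReach_of_mem_fwd {G G' : IODGraph V} {P : IOPartition G} {P' : IOPartition G'}
    (g : Fwd G P ≃ Fwd G' P') (h : Bwd G' P' ≃ Bwd G P) {f : V × V} (hf : f ∈ Fwd G P) :
    childReach G G' P P' g h f.1 (g ⟨f, hf⟩ : V × V).2 :=
  .single <| Or.inr <| Or.inl ⟨⟨f, hf⟩, rfl⟩

theorem childReach_of_fwd_eq_singleton {G G' : IODGraph V} {P : IOPartition G}
    {P' : IOPartition G'} {f f' : V × V} (hF : Fwd G P = {f}) (hF' : Fwd G' P' = {f'})
    (g : Fwd G P ≃ Fwd G' P') (h : Bwd G' P' ≃ Bwd G P) : childReach G G' P P' g h f.1 f'.2 := by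
  have hf : f ∈ Fwd G P := hF ▸ rfl
  have hgf : (g ⟨f, hf⟩ : V × V) = f' := by simpa [hF'] using (g ⟨f, hf⟩).2
  exact hgf ▸ childReach_of_mem_fwd g h hf

end IODGraph

/-! Both parents have a single edge, a forward link: in `G` it leaves the input and in `G'` it
enters the output, so neither parent is informative, but the membrane joins the two ends. -/
namespace CrossoverExample

def inputParent : IODGraph ℕ where
  N := {0, 1, 2}
  E := {(0, 2)}
  I := {0}
  O := {1}
  I_sub := by simp
  O_sub := by simp
  disjIO := by simp
  E_mem := by simp
  no_into_I := by simp
  no_outof_O := by simp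

def outputParent : IODGraph ℕ where
  N := {3, 4, 5}
  E := {(5, 4)}
  I := {3}
  O := {4}
  I_sub := by simp
  O_sub := by simp
  disjIO := by simp
  E_mem := by simp
  no_into_I := by simp
  no_outof_O := by simp

def inputPartition : IOPartition inputParent where
  Psi := {0}
  Om := {1, 2}
  union_eq := by ext; simp [inputParent]; omega
  disj := by simp
  I_sub := by simp [inputParent]
  O_sub := by simp [inputParent]

def outputPartition : IOPartition outputParent where
  Psi := {3, 5}
  Om := {4}
  union_eq := by ext; simp [outputParent]; omega
  disj := by simp
  I_sub := by simp [outputParent]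
  O_sub := by simp [outputParent]

theorem fwd_inputPartition : Fwd inputParent inputPartition = {(0, 2)} := by
  ext ⟨a, b⟩; simp [Fwd, inputParent, inputPartition]; aesop

theorem fwd_outputPartition : Fwd outputParent outputPartition = {(5, 4)} := by
  ext ⟨a, b⟩; simp [Fwd, outputParent, outputPartition]; aesop

theorem bwd_inputPartition : Bwd inputParent inputPartition = ∅ := by
  ext ⟨a, b⟩; simp [Bwd, inputParent, inputPartition]; aesop

theorem bwd_outputPartition : Bwd outputParent outputPartition = ∅ := by
  ext ⟨a, b⟩; simp [Bwd, outputParent, outputPartition]; aesop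

def fwdEquiv : Fwd inputParent inputPartition ≃ Fwd outputParent outputPartition :=
  (Equiv.setCongr fwd_inputPartition).trans <|
    ((Equiv.Set.singleton.{0} _).trans (Equiv.Set.singleton _).symm).trans
      (Equiv.setCongr fwd_outputPartition).symm

def bwdEquiv : Bwd outputParent outputPartition ≃ Bwd inputParent inputPartition :=
  Equiv.setCongr (bwd_outputPartition.trans bwd_inputPartition.symm)

theorem nonInformative_inputParent : NonInformative inputParent :=
  nonInformative_of_edge_closed {0, 2} (by simp [inputParent]) (by simp [inputParent])
    (by simp [inputParent])

theorem nonInformative_outputParent : NonInformative outputParent :=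
  nonInformative_of_edge_closed {3} (by simp [outputParent]) (by simp [outputParent])
    (by simp [outputParent])

theorem crossCompat : CrossCompat inputParent outputParent inputPartition outputPartition where
  psi_om' := by simp [inputPartition, outputPartition]
  psi'_om := by ext; simp [inputPartition, outputPartition]; omega
  finF := fwd_inputPartition ▸ Set.finite_singleton _
  finF' := fwd_outputPartition ▸ Set.finite_singleton _
  finB := bwd_inputPartition ▸ Set.finite_empty
  finB' := bwd_outputPartition ▸ Set.finite_empty
  cardF := by rw [fwd_inputPartition, fwd_outputPartition, Set.ncard_singleton, Set.ncard_singleton]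
  cardB := by rw [bwd_inputPartition, bwd_outputPartition]

end CrossoverExample

open CrossoverExample in
/-- there are two non-informative IOD graphs with crossover
compatible IO partitions and a crossover membrane whose crossover child is
fully informative. -/
theorem noninformative_parents_can_yield_fully_informative_child :
    ∃ (V : Type) (G G' : IODGraph V) (P : IOPartition G) (P' : IOPartition G')
      (g : Fwd G P ≃ Fwd G' P') (h : Bwd G' P' ≃ Bwd G P),
      NonInformative G ∧ NonInformative G' ∧
      CrossCompat G G' P P' ∧
      (∀ i ∈ G.I, ∀ o' ∈ G'.O, childReach G G' P P' g h i o') := by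
  refine ⟨ℕ, inputParent, outputParent, inputPartition, outputPartition, fwdEquiv, bwdEquiv,
    nonInformative_inputParent, nonInformative_outputParent, crossCompat, ?_⟩
  rintro i (rfl : i = 0) o' (rfl : o' = 4)
  exact childReach_of_fwd_eq_singleton fwd_inputPartition fwd_outputPartition _ _
end
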